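/- arXiv:2203.00940 — 2 statements merged into one kernel-verified Lean document; each statement's English description precedes it below -/
import Mathlib

section
/- Let A be a divisor of F, E = E_1 + ⋯ + E_N a sum of distinct rational places, all different from P∞, with supp A ∩ supp E = ∅, and a ∈ Я(A). If H = H_0 + z·H_1 ∈ N_{A,E}(a) satisfies max{ δ_A(H_0), δ(H_1) + δ_A(a) } < deg E − deg A, then H(a) = 0, i.e. H ∈ ⟨z − a⟩_Я. -/
noncomputable section

open Polynomial
attribute [local instance] Classical.propDecidable

/-- Abstract axiomatization of the data of an algebraic function field of one
variable of genus `genus` whose full field of constants is the finite field `Fq`: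
a field `F` of functions, a set of places with their discrete valuations `v`
(normalized so that each valuation is surjective onto `ℤ`; by convention
`v P 0 = 0`), degrees of places, evaluation of functions at rational places,
Riemann–Roch spaces `RRmod A` of divisors `A : Place →₀ ℤ` together with the
statement of the Riemann–Roch theorem tying their dimensions to the genus. -/
structure FnF (Fq : Type) [Field Fq] where
  F : Type
  [fieldF : Field F]
  [algF : Algebra Fq F]
  Place : Type
  v : Place → F → ℤ
  v_zero : ∀ P, v P 0 = 0
  v_mul : ∀ (P : Place) (f g : F), f ≠ 0 → g ≠ 0 → v P (f * g) = v P f + v P g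
  v_add : ∀ (P : Place) (f g : F), f + g ≠ 0 → f ≠ 0 → g ≠ 0 →
    min (v P f) (v P g) ≤ v P (f + g)
  v_neg : ∀ (P : Place) (f : F), v P (-f) = v P f
  v_const : ∀ (P : Place) (c : Fq), v P (algebraMap Fq F c) = 0
  v_surj : ∀ P : Place, ∃ f : F, f ≠ 0 ∧ v P f = 1
  v_finite : ∀ f : F, f ≠ 0 → {P : Place | v P f ≠ 0}.Finite
  fullConstantField : ∀ f : F, f ≠ 0 → (∀ P, 0 ≤ v P f) →
    ∃ c : Fq, f = algebraMap Fq F c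
  degPlace : Place → ℕ
  degPlace_pos : ∀ P, 0 < degPlace P
  eval : Place → F → Fq
  eval_add : ∀ (P : Place) (f g : F), degPlace P = 1 → 0 ≤ v P f → 0 ≤ v P g →
    eval P (f + g) = eval P f + eval P g
  eval_mul : ∀ (P : Place) (f g : F), degPlace P = 1 → 0 ≤ v P f → 0 ≤ v P g →
    eval P (f * g) = eval P f * eval P g
  eval_const : ∀ (P : Place) (c : Fq), degPlace P = 1 →
    eval P (algebraMap Fq F c) = c
  eval_eq_zero_iff : ∀ (P : Place) (f : F), degPlace P = 1 → 0 ≤ v P f →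
    (eval P f = 0 ↔ (f = 0 ∨ 1 ≤ v P f))
  genus : ℕ
  RRmod : (Place →₀ ℤ) → Submodule Fq F
  mem_RRmod : ∀ (A : Place →₀ ℤ) (f : F),
    f ∈ RRmod A ↔ (f = 0 ∨ ∀ P, 0 ≤ v P f + A P)
  riemannRoch_le : ∀ A : Place →₀ ℤ,
    (A.sum fun P n => n * (degPlace P : ℤ)) + 1 - genus ≤
      (Module.finrank Fq (RRmod A) : ℤ)
  riemannRoch_eq : ∀ A : Place →₀ ℤ,
    2 * (genus : ℤ) - 1 ≤ (A.sum fun P n => n * (degPlace P : ℤ)) →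
    (Module.finrank Fq (RRmod A) : ℤ) =
      (A.sum fun P n => n * (degPlace P : ℤ)) + 1 - genus
  RRmod_eq_bot : ∀ A : Place →₀ ℤ,
    (A.sum fun P n => n * (degPlace P : ℤ)) < 0 → RRmod A = ⊥

attribute [instance] FnF.fieldF FnF.algF

namespace FnF

variable {Fq : Type} [Field Fq] (D : FnF Fq)

/-- Divisors of the function field. -/
abbrev Divisor := D.Place →₀ ℤ

/-- The degree of a divisor. -/
def degDiv (A : D.Divisor) : ℤ := A.sum fun P n => n * (D.degPlace P : ℤ)

/-- `Я(A) = ⋃ₘ L(m·P∞ + A)`, the functions whose pole divisor is bounded by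
`A` away from `P∞`. -/
def Ya (Pinf : D.Place) (A : D.Divisor) : Set D.F :=
  {a | ∃ m : ℤ, a ∈ D.RRmod (Finsupp.single Pinf m + A)}

/-- `δ_A(a) = -v_{P∞}(a) - A(P∞)`, the least `m` with `a ∈ L(m·P∞ + A)`
(meaningful for nonzero `a ∈ Я(A)`). -/
def deltaZ (Pinf : D.Place) (A : D.Divisor) (a : D.F) : ℤ :=
  -(D.v Pinf a) - A Pinf

/-- `δ_A(a)` with the convention `δ_A(0) = -∞`. -/
def delta (Pinf : D.Place) (A : D.Divisor) (a : D.F) : WithBot ℤ :=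
  if a = 0 then ⊥ else (D.deltaZ Pinf A a : WithBot ℤ)

/-- The Weierstrass semigroup of a place `P∞`: pole orders at `P∞` of functions
regular away from `P∞`. -/
def WSemigroup (Pinf : D.Place) : Set ℤ :=
  {m | ∃ f : D.F, f ≠ 0 ∧ D.v Pinf f = -m ∧ ∀ P, P ≠ Pinf → 0 ≤ D.v P f}

end FnF

namespace FnF

variable {Fq : Type} [Field Fq] (D : FnF Fq)

lemma degDiv_add' (A B : D.Divisor) : D.degDiv (A + B) = D.degDiv A + D.degDiv B :=
  Finsupp.sum_add_index' (fun _ => zero_mul _) (fun _ n1 n2 => add_mul n1 n2 _)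

/-- `degDiv` as an additive monoid hom. -/
def degDivHom : D.Divisor →+ ℤ := AddMonoidHom.mk' D.degDiv (D.degDiv_add')

lemma degDivHom_apply (A : D.Divisor) : D.degDivHom A = D.degDiv A := rfl

lemma degDiv_single (P : D.Place) (n : ℤ) :
    D.degDiv (Finsupp.single P n) = n * (D.degPlace P : ℤ) :=
  Finsupp.sum_single_index (zero_mul _)

lemma Ya_vbound {A : D.Divisor} {g : D.F} (hg : g ∈ D.Ya Pinf A) (hg0 : g ≠ 0)
    {P : D.Place} (hP : P ≠ Pinf) : 0 ≤ D.v P g + A P := by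
  obtain ⟨m, hm⟩ := hg
  rcases (D.mem_RRmod _ g).1 hm with h | h
  · exact absurd h hg0
  · have := h P
    rwa [Finsupp.add_apply, Finsupp.single_apply, if_neg (fun h => hP h.symm),
      zero_add] at this

end FnF

open FnF in
/-- Let `A` be a divisor of `F`, `E = E_1 + ⋯ + E_N` a sum of distinct
rational places, all different from `P∞`, with `supp A ∩ supp E = ∅`, and `a ∈ Я(A)`.
If `H = H₀ + z·H₁ ∈ N_{A,E}(a)` (i.e. `H₀ ∈ Я(A)`, `H₁ ∈ Я`, and `H(P, a(P)) = 0` for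
all `P ∈ supp E`) satisfies `max{δ_A(H₀), δ(H₁) + δ_A(a)} < deg E − deg A`, then
`H(a) = 0`, i.e. `H ∈ ⟨z − a⟩_Я`. -/
theorem mem_ideal_of_small_degree
    {Fq : Type} [Field Fq] [Fintype Fq] (D : FnF Fq)
    (Pinf : D.Place) (hPinf : D.degPlace Pinf = 1)
    (N : ℕ) (Es : Fin N → D.Place) (hinj : Function.Injective Es)
    (hrat : ∀ j, D.degPlace (Es j) = 1) (hne : ∀ j, Es j ≠ Pinf)
    (A : D.Divisor) (hdisj : ∀ j, A (Es j) = 0)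
    (a : D.F) (ha : a ∈ D.Ya Pinf A)
    (H₀ H₁ : D.F) (hH₀ : H₀ ∈ D.Ya Pinf A) (hH₁ : H₁ ∈ D.Ya Pinf 0)
    (hmem : ∀ j, D.eval (Es j) H₀ + D.eval (Es j) H₁ * D.eval (Es j) a = 0)
    (hδ : max (D.delta Pinf A H₀) (D.delta Pinf 0 H₁ + D.delta Pinf A a) <
      (((N : ℤ) - D.degDiv A : ℤ) : WithBot ℤ)) :
    H₀ + H₁ * a = 0 ∧
      Polynomial.C H₀ + Polynomial.X * Polynomial.C H₁ =
        Polynomial.C H₁ * (Polynomial.X - Polynomial.C a) := by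
  classical
  have key : H₀ + H₁ * a = 0 := by
    by_contra hf
    set f : D.F := H₀ + H₁ * a with hfdef
    set m : ℤ := (N : ℤ) - D.degDiv A - 1 with hmdef
    obtain ⟨hδ0, hδ1⟩ := max_lt_iff.1 hδ
    -- bound on H₀
    have h0m : H₀ ≠ 0 → 0 ≤ D.v Pinf H₀ + m + A Pinf := by
      intro h0
      rw [FnF.delta, if_neg h0] at hδ0
      have := WithBot.coe_lt_coe.1 hδ0
      rw [FnF.deltaZ] at this
      omega
    -- bound on H₁ * a
    have h1am : H₁ ≠ 0 → a ≠ 0 → 0 ≤ D.v Pinf H₁ + D.v Pinf a + m + A Pinf := by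
      intro h1 ha0
      rw [FnF.delta, if_neg h1, FnF.delta, if_neg ha0, ← WithBot.coe_add] at hδ1
      have := WithBot.coe_lt_coe.1 hδ1
      rw [FnF.deltaZ, FnF.deltaZ] at this
      simp only [Finsupp.coe_zero, Pi.zero_apply] at this
      omega
    -- H₀ ∈ L(m P∞ + A)
    have hH₀mem : H₀ ∈ D.RRmod (Finsupp.single Pinf m + A) := by
      rw [D.mem_RRmod]
      by_cases h0 : H₀ = 0
      · exact Or.inl h0
      · refine Or.inr fun P => ?_
        rw [Finsupp.add_apply, Finsupp.single_apply]
        by_cases hP : Pinf = P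
        · subst hP; rw [if_pos rfl]
          have := h0m h0; omega
        · rw [if_neg hP, zero_add]
          exact D.Ya_vbound hH₀ h0 (fun h => hP h.symm)
    -- H₁ * a ∈ L(m P∞ + A)
    have hprodmem : H₁ * a ∈ D.RRmod (Finsupp.single Pinf m + A) := by
      rw [D.mem_RRmod]
      by_cases h1 : H₁ = 0
      · exact Or.inl (by rw [h1, zero_mul])
      by_cases ha0 : a = 0
      · exact Or.inl (by rw [ha0, mul_zero])
      refine Or.inr fun P => ?_
      rw [D.v_mul P H₁ a h1 ha0, Finsupp.add_apply, Finsupp.single_apply]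
      by_cases hP : Pinf = P
      · subst hP; rw [if_pos rfl]
        have := h1am h1 ha0; omega
      · rw [if_neg hP, zero_add]
        have hPne : P ≠ Pinf := fun h => hP h.symm
        have h1b := D.Ya_vbound hH₁ h1 hPne
        have hab := D.Ya_vbound ha ha0 hPne
        simp only [Finsupp.coe_zero, Pi.zero_apply] at h1b
        omega
    have hfmem : f ∈ D.RRmod (Finsupp.single Pinf m + A) :=
      (D.RRmod _).add_mem hH₀mem hprodmem
    have vf : ∀ P, 0 ≤ D.v P f + (Finsupp.single Pinf m + A) P := by
      rcases (D.mem_RRmod _ f).1 hfmem with h | h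
      · exact absurd h hf
      · exact h
    -- valuations at the places E_j are nonnegative
    have hva : ∀ j, 0 ≤ D.v (Es j) a := by
      intro j
      by_cases ha0 : a = 0
      · rw [ha0, D.v_zero]
      · have := D.Ya_vbound ha ha0 (hne j); rw [hdisj j] at this; omega
    have hvH₀ : ∀ j, 0 ≤ D.v (Es j) H₀ := by
      intro j
      by_cases h0 : H₀ = 0
      · rw [h0, D.v_zero]
      · have := D.Ya_vbound hH₀ h0 (hne j); rw [hdisj j] at this; omega
    have hvH₁ : ∀ j, 0 ≤ D.v (Es j) H₁ := by
      intro j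
      by_cases h1 : H₁ = 0
      · rw [h1, D.v_zero]
      · have := D.Ya_vbound hH₁ h1 (hne j)
        simpa using this
    have hvprod : ∀ j, 0 ≤ D.v (Es j) (H₁ * a) := by
      intro j
      by_cases hp : H₁ * a = 0
      · rw [hp, D.v_zero]
      · rw [D.v_mul _ _ _ (left_ne_zero_of_mul hp) (right_ne_zero_of_mul hp)]
        have := hva j; have := hvH₁ j; omega
    -- evaluation of f at E_j vanishes
    have hvf0 : ∀ j, 0 ≤ D.v (Es j) f := by
      intro j
      have := vf (Es j)
      rw [Finsupp.add_apply, Finsupp.single_apply, if_neg (fun h => hne j h.symm),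
        hdisj j] at this
      omega
    have hvf1 : ∀ j, 1 ≤ D.v (Es j) f := by
      intro j
      have heval : D.eval (Es j) f = 0 := by
        rw [hfdef, D.eval_add _ _ _ (hrat j) (hvH₀ j) (hvprod j),
          D.eval_mul _ _ _ (hrat j) (hvH₁ j) (hva j)]
        exact hmem j
      rcases (D.eval_eq_zero_iff (Es j) f (hrat j) (hvf0 j)).1 heval with h | h
      · exact absurd h hf
      · exact h
    -- the divisor with the zeros removed
    set Ediv : D.Divisor := ∑ j : Fin N, Finsupp.single (Es j) 1 with hEdef
    have hEapply : ∀ j, Ediv (Es j) = 1 := by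
      intro j
      rw [hEdef, Finsupp.finset_sum_apply]
      rw [Finset.sum_eq_single j]
      · simp
      · intro b _ hb
        rw [Finsupp.single_apply, if_neg (fun h => hb (hinj h))]
      · intro h; exact absurd (Finset.mem_univ j) h
    have hEapply' : ∀ P, (∀ j, Es j ≠ P) → Ediv P = 0 := by
      intro P hP
      rw [hEdef, Finsupp.finset_sum_apply]
      apply Finset.sum_eq_zero
      intro j _
      rw [Finsupp.single_apply, if_neg (hP j)]
    set B : D.Divisor := Finsupp.single Pinf m + A - Ediv with hBdef
    have hfB : f ∈ D.RRmod B := by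
      rw [D.mem_RRmod]
      refine Or.inr fun P => ?_
      by_cases hP : ∃ j, Es j = P
      · obtain ⟨j, rfl⟩ := hP
        rw [hBdef, Finsupp.sub_apply, Finsupp.add_apply, Finsupp.single_apply,
          if_neg (fun h => hne j h.symm), hdisj j, hEapply j]
        have := hvf1 j; omega
      · push_neg at hP
        rw [hBdef, Finsupp.sub_apply, hEapply' P hP, sub_zero]
        exact vf P
    -- degree computation
    have hdegE : D.degDiv Ediv = (N : ℤ) := by
      rw [hEdef, ← degDivHom_apply, map_sum]
      have : ∀ j : Fin N, D.degDivHom (Finsupp.single (Es j) 1) = 1 := by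
        intro j
        rw [degDivHom_apply, D.degDiv_single, hrat j]
        norm_num
      rw [Finset.sum_congr rfl (fun j _ => this j)]
      simp
    have hdegB : D.degDiv B = -1 := by
      rw [hBdef, ← degDivHom_apply, map_sub, map_add, degDivHom_apply,
        degDivHom_apply, degDivHom_apply, D.degDiv_single, hPinf, hdegE]
      rw [hmdef]; push_cast; ring
    have hbot := D.RRmod_eq_bot B (by show D.degDiv B < 0; omega)
    rw [hbot, Submodule.mem_bot] at hfB
    exact hf hfB
  refine ⟨key, ?_⟩
  have h0 : H₀ = -(H₁ * a) := by linear_combination key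
  rw [h0, map_neg, map_mul]
  ring
end
end

section
/- Let Q(z) = Σ_{t=0}^{ℓ} z^t Q^{(t)} with Q^{(t)} ∈ Я(−tG), and let f ∈ L(G). If β is an integer with β > δ_G(Q) and Q̂(f̂) ≡ 0 (mod x^β), then Q(f) = 0. -/
noncomputable section

open Polynomial
attribute [local instance] Classical.propDecidable

namespace FnF

variable {Fq : Type} [Field Fq] (D : FnF Fq)

/-- The `b`-th coefficient `Q_b ∈ F` of the expansion `Q(z) = Σ_b Q_b (z − r)^b` of a
polynomial `Q ∈ F[z]` around `r ∈ 𝔽_q`. -/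
def taylorCoeff (r : Fq) (Q : Polynomial D.F) (b : ℕ) : D.F :=
  (Q.comp (Polynomial.X + Polynomial.C (algebraMap Fq D.F r))).coeff b

/-- `Q ∈ F[z]` has a root of multiplicity at least `s` at `(P, r)`: writing
`Q = Σ_b Q_b (z − r)^b`, every coefficient satisfies `v_P(Q_b) ≥ s − b`. This is
equivalent to the expansion `Q = Σ_{a+b≥s} c_{a,b} φ^a (z−r)^b` in any local
parameter `φ` of `P`. -/
def HasRootMultAtLeast (P : D.Place) (r : Fq) (Q : Polynomial D.F) (s : ℕ) : Prop :=
  ∀ b : ℕ, D.taylorCoeff r Q b = 0 ∨ (s : ℤ) - b ≤ D.v P (D.taylorCoeff r Q b)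

/-- `Q ∈ F[z]` has a root of multiplicity exactly `s` at `(P, r)`: in addition to
multiplicity at least `s`, some coefficient with `b ≤ s` satisfies `v_P(Q_b) = s − b`
(i.e. `c_{a,s−a} ≠ 0` for some `0 ≤ a ≤ s`). -/
def HasRootMult (P : D.Place) (r : Fq) (Q : Polynomial D.F) (s : ℕ) : Prop :=
  D.HasRootMultAtLeast P r Q s ∧
    ∃ b ≤ s, D.taylorCoeff r Q b ≠ 0 ∧ D.v P (D.taylorCoeff r Q b) = (s : ℤ) - b

end FnF

namespace FnF

variable {Fq : Type} [Field Fq] (D : FnF Fq)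

/-- The Guruswami–Sudan interpolation module `M_{s,ℓ}(D,G)` for the received word `r`:
all `Q = Σ_{t=0}^ℓ z^t Q^{(t)} ∈ F[z]` with `Q^{(t)} ∈ Я(−tG)` having a root of
multiplicity at least `s` at `(P_j, r_j)` for `j = 1,…,n`. -/
def Minterp (Pinf : D.Place) {n : ℕ} (Ps : Fin n → D.Place) (r : Fin n → Fq)
    (G : D.Divisor) (s ℓ : ℕ) : Set (Polynomial D.F) :=
  {Q | Q.natDegree ≤ ℓ ∧ (∀ t : ℕ, Q.coeff t ∈ D.Ya Pinf ((-(t : ℤ)) • G)) ∧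
    ∀ j, D.HasRootMultAtLeast (Ps j) (r j) Q s}

/-- `δ_G(Q) = max_t δ_{−tG}(Q^{(t)})` for `Q = Σ_{t=0}^ℓ z^t Q^{(t)}`. -/
def deltaG (Pinf : D.Place) (G : D.Divisor) (ℓ : ℕ) (Q : Polynomial D.F) : WithBot ℤ :=
  (Finset.range (ℓ + 1)).sup fun t => D.delta Pinf ((-(t : ℤ)) • G) (Q.coeff t)

end FnF

namespace FnF

variable {Fq : Type} [Field Fq] (D : FnF Fq)

/-- `ps` is the `P₀`-adic power series expansion map `h ↦ ĥ` (in the local parameter `x`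
of `P₀`), restricted to functions regular at `P₀`: it is additive and multiplicative on
functions with `v_{P₀} ≥ 0`, sends constants to constants, and the order of vanishing of
`ĥ` equals `v_{P₀}(h)`. -/
def IsExpansionAt (P₀ : D.Place) (ps : D.F → PowerSeries Fq) : Prop :=
  ps 0 = 0 ∧ ps 1 = 1 ∧
  (∀ f g : D.F, 0 ≤ D.v P₀ f → 0 ≤ D.v P₀ g → ps (f + g) = ps f + ps g) ∧
  (∀ f g : D.F, 0 ≤ D.v P₀ f → 0 ≤ D.v P₀ g → ps (f * g) = ps f * ps g) ∧
  (∀ c : Fq, ps (algebraMap Fq D.F c) = PowerSeries.C c) ∧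
  (∀ f : D.F, f ≠ 0 → 0 ≤ D.v P₀ f →
    (∀ n : ℕ, (n : ℤ) < D.v P₀ f → PowerSeries.coeff n (ps f) = 0) ∧
      PowerSeries.coeff (D.v P₀ f).toNat (ps f) ≠ 0)

end FnF

namespace FnF

variable {Fq : Type} [Field Fq] (D : FnF Fq)

lemma v_one' (P : D.Place) : D.v P 1 = 0 := by
  have h := D.v_const P 1
  simpa using h

lemma v_pow' (P : D.Place) (f : D.F) (hf : f ≠ 0) (t : ℕ) :
    D.v P (f ^ t) = t * D.v P f := by
  induction t with
  | zero => simpa using D.v_one' P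
  | succ n ih =>
    rw [pow_succ, D.v_mul P _ _ (pow_ne_zero n hf) hf, ih]
    push_cast
    ring

lemma v_sum_ge {ι : Type} (P : D.Place) (c : ℤ) (s : Finset ι) (g : ι → D.F)
    (h : ∀ i ∈ s, g i = 0 ∨ c ≤ D.v P (g i)) :
    s.sum g = 0 ∨ c ≤ D.v P (s.sum g) := by
  classical
  induction s using Finset.cons_induction with
  | empty => left; simp
  | cons a s ha ih =>
    rw [Finset.sum_cons]
    have hrest := ih (fun i hi => h i (Finset.mem_cons_of_mem hi))
    by_cases hga : g a = 0
    · rw [hga, zero_add]; exact hrest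
    have hgv : c ≤ D.v P (g a) := (h a (Finset.mem_cons_self a s)).resolve_left hga
    rcases hrest with h0 | hv
    · rw [h0, add_zero]; right; exact hgv
    by_cases hsum : g a + s.sum g = 0
    · left; exact hsum
    · right
      by_cases hs0 : s.sum g = 0
      · rw [hs0, add_zero]; exact hgv
      · exact le_trans (le_min hgv hv) (D.v_add P _ _ hsum hga hs0)

lemma v_sum_nonneg {ι : Type} (P : D.Place) (s : Finset ι) (g : ι → D.F)
    (h : ∀ i ∈ s, 0 ≤ D.v P (g i)) : 0 ≤ D.v P (s.sum g) := by
  rcases D.v_sum_ge P 0 s g (fun i hi => Or.inr (h i hi)) with h0 | hv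
  · rw [h0, D.v_zero]
  · exact hv

lemma v_pow_nonneg (P : D.Place) (f : D.F) (hf : 0 ≤ D.v P f) (t : ℕ) :
    0 ≤ D.v P (f ^ t) := by
  by_cases h0 : f = 0
  · subst h0
    rcases Nat.eq_zero_or_pos t with ht | ht
    · subst ht; rw [pow_zero, D.v_one' P]
    · rw [zero_pow (by omega : t ≠ 0), D.v_zero]
  · rw [D.v_pow' P f h0 t]
    positivity

lemma ps_sum {ι : Type} (P₀ : D.Place) (ps : D.F → PowerSeries Fq)
    (hps : D.IsExpansionAt P₀ ps) (s : Finset ι) (g : ι → D.F)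
    (hv : ∀ i ∈ s, 0 ≤ D.v P₀ (g i)) :
    ps (s.sum g) = s.sum fun i => ps (g i) := by
  classical
  obtain ⟨h0, _, hadd, _, _, _⟩ := hps
  induction s using Finset.cons_induction with
  | empty => simpa using h0
  | cons a s ha ih =>
    rw [Finset.sum_cons, Finset.sum_cons,
      hadd _ _ (hv a (Finset.mem_cons_self a s))
        (D.v_sum_nonneg P₀ s g (fun i hi => hv i (Finset.mem_cons_of_mem hi))),
      ih (fun i hi => hv i (Finset.mem_cons_of_mem hi))]

lemma ps_pow (P₀ : D.Place) (ps : D.F → PowerSeries Fq)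
    (hps : D.IsExpansionAt P₀ ps) (f : D.F) (hf : 0 ≤ D.v P₀ f) (t : ℕ) :
    ps (f ^ t) = (ps f) ^ t := by
  obtain ⟨_, h1, _, hmul, _, _⟩ := hps
  induction t with
  | zero => simpa using h1
  | succ n ih =>
    rw [pow_succ, pow_succ, hmul _ _ (D.v_pow_nonneg P₀ f hf n) hf, ih]

end FnF

open FnF in
/-- Let `Q(z) = Σ_{t=0}^{ℓ} z^t Q^{(t)}` with `Q^{(t)} ∈ Я(−tG)`, and
let `f ∈ L(G)`. If `β` is an integer with `β > δ_G(Q)` and `Q̂(f̂) ≡ 0 (mod x^β)`, then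
`Q(f) = 0`. -/
theorem root_of_power_series_root
    {Fq : Type} [Field Fq] [Fintype Fq] (D : FnF Fq)
    (Pinf : D.Place) (hPinf : D.degPlace Pinf = 1)
    (μ : ℕ) (hμpos : 0 < μ) (hμmem : (μ : ℤ) ∈ D.WSemigroup Pinf)
    (hμmin : ∀ m : ℤ, 0 < m → m ∈ D.WSemigroup Pinf → (μ : ℤ) ≤ m)
    (x : D.F) (hxv : D.v Pinf x = -(μ : ℤ)) (hxreg : ∀ P, P ≠ Pinf → 0 ≤ D.v P x)
    (G : D.Divisor) (hGeff : ∀ P, 0 ≤ G P)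
    (P₀ : D.Place) (hP₀rat : D.degPlace P₀ = 1) (hP₀ne : P₀ ≠ Pinf)
    (hP₀G : G P₀ = 0) (hxP₀ : D.v P₀ x = 1)
    (ps : D.F → PowerSeries Fq) (hps : D.IsExpansionAt P₀ ps)
    (hpsx : ps x = PowerSeries.X)
    (ℓ : ℕ) (Q : Polynomial D.F) (hQdeg : Q.natDegree ≤ ℓ)
    (hQcoeff : ∀ t : ℕ, Q.coeff t ∈ D.Ya Pinf ((-(t : ℤ)) • G))
    (f : D.F) (hf : f ∈ D.RRmod G)
    (β : ℕ) (hβ : D.deltaG Pinf G ℓ Q < ((β : ℤ) : WithBot ℤ))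
    (hcong : ∀ k : ℕ, k < β →
      PowerSeries.coeff k
        (∑ t ∈ Finset.range (ℓ + 1), ps (Q.coeff t) * (ps f) ^ t) = 0) :
    Q.eval f = 0 := by
  classical
  by_contra hne
  -- abbreviations
  set g : ℕ → D.F := fun t => Q.coeff t * f ^ t with hgdef
  have heval : Q.eval f = ∑ t ∈ Finset.range (ℓ + 1), g t := by
    rw [Polynomial.eval_eq_sum_range' (lt_of_le_of_lt hQdeg (Nat.lt_succ_self ℓ))]
  -- f bound : for all P, if f^t ≠ 0 then v P (f^t) ≥ -t * G P
  have hfP : ∀ P, f ≠ 0 → -(G P) ≤ D.v P f := by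
    intro P hf0
    have := (D.mem_RRmod G f).mp hf
    rcases this with h | h
    · exact absurd h hf0
    · have := h P; omega
  have hft : ∀ (P : D.Place) (t : ℕ), f ^ t ≠ 0 → -((t : ℤ) * G P) ≤ D.v P (f ^ t) := by
    intro P t hft0
    by_cases hf0 : f = 0
    · subst hf0
      rcases Nat.eq_zero_or_pos t with ht | ht
      · subst ht; simp [D.v_one' P]
      · exact absurd (zero_pow (by omega : t ≠ 0)) hft0
    · rw [D.v_pow' P f hf0 t]
      have h1 : -(G P) ≤ D.v P f := hfP P hf0
      have := mul_le_mul_of_nonneg_left h1 (Int.ofNat_nonneg t)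
      linarith
  -- coefficient bounds away from Pinf
  have hcoeffP : ∀ (t : ℕ) (P : D.Place), P ≠ Pinf → Q.coeff t ≠ 0 →
      (t : ℤ) * G P ≤ D.v P (Q.coeff t) := by
    intro t P hP hne0
    obtain ⟨m, hm⟩ := hQcoeff t
    rcases (D.mem_RRmod _ _).mp hm with h | h
    · exact absurd h hne0
    · have hP' := h P
      rw [Finsupp.add_apply, Finsupp.single_apply, if_neg (fun h => hP h.symm),
        Finsupp.smul_apply, smul_eq_mul] at hP'
      linarith
  -- coefficient bound at Pinf from hβ
  have hcoeffInf : ∀ t ∈ Finset.range (ℓ + 1), Q.coeff t ≠ 0 →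
      (t : ℤ) * G Pinf - (β : ℤ) + 1 ≤ D.v Pinf (Q.coeff t) := by
    intro t ht hne0
    have hle : D.delta Pinf ((-(t : ℤ)) • G) (Q.coeff t) ≤ D.deltaG Pinf G ℓ Q :=
      Finset.le_sup (f := fun (t : ℕ) => D.delta Pinf ((-(t : ℤ)) • G) (Q.coeff t)) ht
    have hlt : D.delta Pinf ((-(t : ℤ)) • G) (Q.coeff t) < ((β : ℤ) : WithBot ℤ) :=
      lt_of_le_of_lt hle hβ
    rw [FnF.delta, if_neg hne0] at hlt
    have hlt' : D.deltaZ Pinf ((-(t : ℤ)) • G) (Q.coeff t) < (β : ℤ) :=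
      WithBot.coe_lt_coe.mp hlt
    rw [FnF.deltaZ, Finsupp.smul_apply, smul_eq_mul] at hlt'
    linarith
  -- valuation bounds for terms g t
  have hA : ∀ (t : ℕ) (P : D.Place), P ≠ Pinf → g t = 0 ∨ 0 ≤ D.v P (g t) := by
    intro t P hP
    by_cases h0 : g t = 0
    · exact Or.inl h0
    · right
      have hq : Q.coeff t ≠ 0 := fun h => h0 (by simp [hgdef, h])
      have hp : f ^ t ≠ 0 := fun h => h0 (by simp [hgdef, h])
      rw [hgdef]
      simp only
      rw [D.v_mul P _ _ hq hp]
      have h1 := hcoeffP t P hP hq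
      have h2 := hft P t hp
      linarith
  have hB : ∀ t ∈ Finset.range (ℓ + 1), g t = 0 ∨ 1 - (β : ℤ) ≤ D.v Pinf (g t) := by
    intro t ht
    by_cases h0 : g t = 0
    · exact Or.inl h0
    · right
      have hq : Q.coeff t ≠ 0 := fun h => h0 (by simp [hgdef, h])
      have hp : f ^ t ≠ 0 := fun h => h0 (by simp [hgdef, h])
      rw [hgdef]
      simp only
      rw [D.v_mul Pinf _ _ hq hp]
      have h1 := hcoeffInf t ht hq
      have h2 := hft Pinf t hp
      linarith
  have hC : ∀ t : ℕ, 0 ≤ D.v P₀ (g t) := by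
    intro t
    by_cases h0 : g t = 0
    · rw [h0, D.v_zero]
    · have := hA t P₀ hP₀ne
      rcases this with h | h
      · exact absurd h h0
      · exact h
  -- power series of the evaluation
  have hvq : ∀ t : ℕ, 0 ≤ D.v P₀ (Q.coeff t) := by
    intro t
    by_cases h0 : Q.coeff t = 0
    · rw [h0, D.v_zero]
    · have := hcoeffP t P₀ hP₀ne h0
      have ht : (0:ℤ) ≤ (t : ℤ) * G P₀ := by rw [hP₀G]; ring_nf; omega
      omega
  have hvf : 0 ≤ D.v P₀ f := by
    by_cases h0 : f = 0
    · rw [h0, D.v_zero]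
    · have := hfP P₀ h0; rw [hP₀G] at this; omega
  obtain ⟨hps0, hps1, hpsadd, hpsmul, hpsc, hpsord⟩ := hps
  have hpseval : ps (Q.eval f) =
      ∑ t ∈ Finset.range (ℓ + 1), ps (Q.coeff t) * (ps f) ^ t := by
    rw [heval, D.ps_sum P₀ ps ⟨hps0, hps1, hpsadd, hpsmul, hpsc, hpsord⟩ _ _
      (fun t _ => hC t)]
    refine Finset.sum_congr rfl fun t _ => ?_
    rw [hgdef]
    simp only
    rw [hpsmul _ _ (hvq t) (D.v_pow_nonneg P₀ f hvf t),
      D.ps_pow P₀ ps ⟨hps0, hps1, hpsadd, hpsmul, hpsc, hpsord⟩ f hvf t]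
  -- the evaluation vanishes to order ≥ β at P₀
  have hvh : 0 ≤ D.v P₀ (Q.eval f) := by
    rw [heval]; exact D.v_sum_nonneg P₀ _ _ (fun t _ => hC t)
  have hord := hpsord (Q.eval f) hne hvh
  have hβle : (β : ℤ) ≤ D.v P₀ (Q.eval f) := by
    by_contra hlt
    push_neg at hlt
    have htn : (D.v P₀ (Q.eval f)).toNat < β := by omega
    have := hcong _ htn
    rw [← hpseval] at this
    exact hord.2 this
  -- the evaluation lies in a Riemann-Roch space of negative degree
  set A : D.Divisor :=
    Finsupp.single Pinf ((β : ℤ) - 1) + Finsupp.single P₀ (-(β : ℤ)) with hAdef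
  have hmemA : Q.eval f ∈ D.RRmod A := by
    rw [D.mem_RRmod]
    right
    intro P
    by_cases hP1 : P = Pinf
    · rw [hP1]
      have : 1 - (β : ℤ) ≤ D.v Pinf (Q.eval f) := by
        rw [heval]
        rcases D.v_sum_ge Pinf (1 - (β : ℤ)) _ _ hB with h | h
        · rw [← heval] at h; exact absurd h hne
        · exact h
      rw [hAdef, Finsupp.add_apply, Finsupp.single_apply, if_pos rfl,
        Finsupp.single_apply, if_neg (fun h => hP₀ne h)]
      omega
    · by_cases hP2 : P = P₀
      · rw [hP2]
        rw [hAdef, Finsupp.add_apply, Finsupp.single_apply,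
          if_neg (fun h => hP₀ne h.symm), Finsupp.single_apply, if_pos rfl]
        omega
      · have : 0 ≤ D.v P (Q.eval f) := by
          rw [heval]
          rcases D.v_sum_ge P 0 _ _ (fun t _ => hA t P hP1) with h | h
          · rw [← heval] at h; exact absurd h hne
          · exact h
        rw [hAdef, Finsupp.add_apply, Finsupp.single_apply,
          if_neg (fun h => hP1 h.symm), Finsupp.single_apply,
          if_neg (fun h => hP2 h.symm)]
        omega
  have hdeg : (A.sum fun P n => n * (D.degPlace P : ℤ)) < 0 := by
    rw [hAdef, Finsupp.sum_add_index' (fun P => by simp)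
      (fun P b₁ b₂ => by ring),
      Finsupp.sum_single_index (by simp), Finsupp.sum_single_index (by simp),
      hPinf, hP₀rat]
    norm_num
  rw [D.RRmod_eq_bot A hdeg, Submodule.mem_bot] at hmemA
  exact hne hmemA
end
end
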